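/- arXiv:0907.3282 — 7 statements merged into one kernel-verified Lean document; each statement's English description precedes it below -/
import Mathlib

section
/- Let α > 0, μ̃ > 0, t ∈ (0,1] and φ ≥ 0. Then the supremum, over all deterministic admissible strategies ζ on [0,t] with initial holdings φ, of the quantity ∫₀ᵗ ζ(r)·exp(−μ̃·r − α·∫₀ʳ ζ(v) dv) dr is equal to (1 − e^{−α·φ})/α. (This is the value f(t,φ) of the deterministic control problem corresponding to log-linear market impact g(ζ) = α·ζ.) -/
/-!
With `Z r = ∫₀ʳ ζ`, the proceeds integrand is at most `ζ r * exp (-α Z r)`, which is almost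
everywhere the derivative of the monotone function `-exp (-α Z r) / α` (Lebesgue differentiation).
The integral of the derivative of a monotone function is at most its increment, so the proceeds
are at most `(1 - exp (-α Z t)) / α ≤ (1 - exp (-α φ)) / α`. Conversely, selling `φ` at the
constant rate `φ / τ` on `[0, τ]` earns `φ (1 - exp (-(μ τ + α φ))) / (μ τ + α φ)`, which tends
to this bound as `τ → 0⁺`.
-/

open MeasureTheory intervalIntegral Set Filter Real Topology
open scoped Interval

section Primitive

variable {ζ : ℝ → ℝ} {a b : ℝ}

lemma integrableOn_Icc_of_nonneg_of_le (hζ : Measurable ζ) {M : ℝ}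
    (h0 : ∀ r ∈ Icc a b, 0 ≤ ζ r) (hM : ∀ r ∈ Icc a b, ζ r ≤ M) :
    IntegrableOn ζ (Icc a b) :=
  Measure.integrableOn_of_bounded measure_Icc_lt_top.ne hζ.aestronglyMeasurable
    (ae_restrict_of_forall_mem measurableSet_Icc fun r hr => by
      rw [Real.norm_of_nonneg (h0 r hr)]; exact hM r hr)

lemma monotoneOn_primitive_of_nonneg (hζ : IntegrableOn ζ (Icc a b))
    (h0 : ∀ r ∈ Icc a b, 0 ≤ ζ r) : MonotoneOn (fun r => ∫ v in a..r, ζ v) (Icc a b) := by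
  intro x hx y hy hxy
  have hint : ∀ z ∈ Icc a b, IntervalIntegrable ζ volume a z := fun z hz =>
    (intervalIntegrable_iff_integrableOn_Icc_of_le hz.1).2
      (hζ.mono_set (Icc_subset_Icc_right hz.2))
  rw [← sub_nonneg, integral_interval_sub_left (hint y hy) (hint x hx)]
  exact integral_nonneg hxy fun r hr => h0 r ⟨hx.1.trans hr.1, hr.2.trans hy.2⟩

lemma integral_mul_exp_neg_primitive_le {α : ℝ} (hα : 0 < α) (hab : a ≤ b)
    (hζ : IntegrableOn ζ (Icc a b)) (h0 : ∀ r ∈ Icc a b, 0 ≤ ζ r) :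
    ∫ r in a..b, ζ r * exp (-α * ∫ v in a..r, ζ v) ≤ (1 - exp (-α * ∫ v in a..b, ζ v)) / α := by
  set Z := fun r => ∫ v in a..r, ζ v
  set H := fun r => -exp (-α * Z r) / α
  have hH : MonotoneOn H (Icc a b) := fun x hx y hy hxy => by
    have hZxy := monotoneOn_primitive_of_nonneg hζ h0 hx hy hxy
    have : exp (-α * Z y) ≤ exp (-α * Z x) := exp_le_exp.2 (by nlinarith)
    exact div_le_div_of_nonneg_right (neg_le_neg this) hα.le
  have hderiv : ∀ᵐ r, r ∈ Ι a b → ζ r * exp (-α * Z r) = deriv H r := by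
    have hζ' : IntervalIntegrable ζ volume a b :=
      (intervalIntegrable_iff_integrableOn_Icc_of_le hab).2 hζ
    filter_upwards [hζ'.ae_hasDerivAt_integral] with r hr hrab
    have hZ := hr (uIoc_subset_uIcc hrab) a left_mem_uIcc
    have hH' : HasDerivAt H (ζ r * exp (-α * Z r)) r :=
      ((hZ.const_mul (-α)).exp.neg.div_const α).congr_deriv (by field_simp; ring)
    exact hH'.deriv.symm
  calc ∫ r in a..b, ζ r * exp (-α * Z r) = ∫ r in a..b, deriv H r := integral_congr_ae hderiv
    _ ≤ H b - H a := by
      have := (uIcc_of_le hab ▸ hH).intervalIntegral_deriv_mem_uIcc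
      rw [uIcc_of_le (sub_nonneg.2 (hH (left_mem_Icc.2 hab) (right_mem_Icc.2 hab) hab))] at this
      exact this.2
    _ = (1 - exp (-α * Z b)) / α := by simp only [H, Z, integral_same, mul_zero, exp_zero]; ring

lemma integral_mul_exp_neg_le {μ α t : ℝ} (hα : 0 < α) (hμ : 0 ≤ μ) (ht : 0 ≤ t)
    (hζ : IntegrableOn ζ (Icc 0 t)) (h0 : ∀ r ∈ Icc 0 t, 0 ≤ ζ r) :
    ∫ r in 0..t, ζ r * exp (-μ * r - α * ∫ v in 0..r, ζ v)
      ≤ (1 - exp (-α * ∫ v in 0..t, ζ v)) / α := by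
  have hZ : ContinuousOn (fun r => ∫ v in 0..r, ζ v) (Icc 0 t) := by
    have := continuousOn_primitive_interval (μ := volume) (f := ζ) (a := 0) (b := t)
    rw [uIcc_of_le ht] at this
    exact this hζ
  have hint : ∀ c : ℝ, IntervalIntegrable (fun r => ζ r * exp (c * r - α * ∫ v in 0..r, ζ v))
      volume 0 t := fun c =>
    (intervalIntegrable_iff_integrableOn_Icc_of_le ht).2 <|
      hζ.mul_continuousOn (by fun_prop) isCompact_Icc
  refine (integral_mono_on ht (hint (-μ)) (by simpa using hint 0) fun r hr => ?_).trans
    (integral_mul_exp_neg_primitive_le hα ht hζ h0)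
  exact mul_le_mul_of_nonneg_left (exp_le_exp.2 (by nlinarith [hr.1])) (h0 r hr)

end Primitive

noncomputable def blockStrategy (φ τ : ℝ) : ℝ → ℝ := (Iic τ).indicator fun _ => φ / τ

section BlockStrategy

variable {φ τ : ℝ}

lemma blockStrategy_nonneg (hφ : 0 ≤ φ) (hτ : 0 ≤ τ) (r : ℝ) : 0 ≤ blockStrategy φ τ r :=
  indicator_nonneg (fun _ _ => by positivity) r

lemma blockStrategy_le (hφ : 0 ≤ φ) (hτ : 0 ≤ τ) (r : ℝ) : blockStrategy φ τ r ≤ φ / τ :=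
  indicator_le_self' (fun _ _ => by positivity) r

lemma integral_blockStrategy {r : ℝ} (hτ : 0 ≤ τ) (hr : 0 ≤ r) :
    ∫ v in 0..r, blockStrategy φ τ v = φ / τ * min r τ := by
  have hconst : ∀ s, ∫ _ in 0..s, φ / τ = φ / τ * s := fun s => by
    rw [intervalIntegral.integral_const, sub_zero, smul_eq_mul, mul_comm]
  rcases le_total r τ with hrτ | hτr
  · have hEq : EqOn (blockStrategy φ τ) (fun _ => φ / τ) (uIcc 0 r) := fun v hv =>
      indicator_of_mem ((uIcc_of_le hr ▸ hv).2.trans hrτ : v ≤ τ) _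
    rw [integral_congr hEq, min_eq_left hrτ, hconst]
  · rw [min_eq_right hτr, ← hconst]
    exact integral_indicator ⟨hτ, hτr⟩

lemma integral_blockStrategy_mul_exp {μ α t : ℝ} (hτ : 0 < τ) (hτt : τ ≤ t)
    (hK : μ * τ + α * φ ≠ 0) :
    ∫ r in 0..t, blockStrategy φ τ r * exp (-μ * r - α * ∫ v in 0..r, blockStrategy φ τ v)
      = φ * (1 - exp (-(μ * τ + α * φ))) / (μ * τ + α * φ) := by
  set k := μ + α * (φ / τ)
  have hkτ : k * τ = μ * τ + α * φ := by simp only [k]; field_simp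
  have hk : -k ≠ 0 := neg_ne_zero.2 fun h => hK (by rw [← hkτ, h, zero_mul])
  calc _ = ∫ r in 0..τ, φ / τ * exp (-k * r) := by
        refine (integral_congr fun r hr => ?_).trans (integral_indicator ⟨hτ.le, hτt⟩)
        rw [uIcc_of_le (hτ.le.trans hτt)] at hr
        by_cases hrτ : r ≤ τ
        · rw [integral_blockStrategy hτ.le hr.1, min_eq_left hrτ]
          simp only [blockStrategy, indicator, mem_Iic, mem_ofPred_eq, hrτ, if_true, k]
          ring_nf
        · simp [blockStrategy, indicator, hrτ]
    _ = φ / τ * ((-k)⁻¹ * (exp (-k * τ) - 1)) := by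
        rw [intervalIntegral.integral_const_mul, integral_comp_mul_left (fun x => exp x) hk,
          integral_exp, mul_zero, exp_zero, smul_eq_mul]
    _ = _ := by
        rw [← hkτ, neg_mul]
        field_simp
        ring

lemma tendsto_blockStrategy_proceeds {μ α : ℝ} (hα : 0 < α) (hφ : 0 ≤ φ) :
    Tendsto (fun τ => φ * (1 - exp (-(μ * τ + α * φ))) / (μ * τ + α * φ)) (𝓝[>] 0)
      (𝓝 ((1 - exp (-α * φ)) / α)) := by
  -- for `φ = 0` the denominator vanishes at `τ = 0`, but the function is identically `0`
  rcases hφ.eq_or_lt with rfl | hφ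
  · simp
  refine tendsto_nhdsWithin_of_tendsto_nhds ?_
  have hcont : ContinuousAt (fun τ => φ * (1 - exp (-(μ * τ + α * φ))) / (μ * τ + α * φ)) 0 :=
    ContinuousAt.div (by fun_prop) (by fun_prop) (by simp [hα.ne', hφ.ne'])
  convert hcont.tendsto using 2
  field_simp
  ring_nf

end BlockStrategy

/-- The value of the deterministic control problem with log-linear
market impact `g(ζ) = α ζ`: the supremum over all deterministic admissible
strategies on `[0,t]` with initial holdings `φ` of the discounted proceeds equals
`(1 - exp (-α φ)) / α`. -/
theorem logLinear_value (α μ t φ : ℝ) (hα : 0 < α) (hμ : 0 < μ)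
    (ht : t ∈ Set.Ioc (0 : ℝ) 1) (hφ : 0 ≤ φ) :
    sSup {y : ℝ | ∃ ζ : ℝ → ℝ, Measurable ζ ∧
        (∃ M : ℝ, ∀ r ∈ Set.Icc (0 : ℝ) t, ζ r ≤ M) ∧
        (∀ r ∈ Set.Icc (0 : ℝ) t, 0 ≤ ζ r) ∧
        (∫ r in (0 : ℝ)..t, ζ r) ≤ φ ∧
        y = ∫ r in (0 : ℝ)..t,
              ζ r * Real.exp (-μ * r - α * ∫ v in (0 : ℝ)..r, ζ v)}
      = (1 - Real.exp (-α * φ)) / α := by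
  obtain ⟨ht0, -⟩ := ht
  set S := {y : ℝ | ∃ ζ : ℝ → ℝ, Measurable ζ ∧
        (∃ M : ℝ, ∀ r ∈ Set.Icc (0 : ℝ) t, ζ r ≤ M) ∧
        (∀ r ∈ Set.Icc (0 : ℝ) t, 0 ≤ ζ r) ∧
        (∫ r in (0 : ℝ)..t, ζ r) ≤ φ ∧
        y = ∫ r in (0 : ℝ)..t, ζ r * Real.exp (-μ * r - α * ∫ v in (0 : ℝ)..r, ζ v)}
  have hblock : ∀ τ ∈ Ioc 0 t, φ * (1 - exp (-(μ * τ + α * φ))) / (μ * τ + α * φ) ∈ S :=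
    fun τ ⟨hτ, hτt⟩ => ⟨blockStrategy φ τ, measurable_const.indicator measurableSet_Iic,
      ⟨φ / τ, fun r _ => blockStrategy_le hφ hτ.le r⟩,
      fun r _ => blockStrategy_nonneg hφ hτ.le r,
      by rw [integral_blockStrategy hτ.le ht0.le, min_eq_right hτt, div_mul_cancel₀ _ hτ.ne'],
      (integral_blockStrategy_mul_exp hτ hτt (by positivity)).symm⟩
  refine IsLUB.csSup_eq ⟨?_, fun b hb => ?_⟩ ⟨_, hblock t ⟨ht0, le_rfl⟩⟩
  · rintro _ ⟨ζ, hζ, ⟨M, hM⟩, h0, hζφ, rfl⟩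
    refine (integral_mul_exp_neg_le hα hμ.le ht0.le
      (integrableOn_Icc_of_nonneg_of_le hζ h0 hM) h0).trans ?_
    exact div_le_div_of_nonneg_right (sub_le_sub_left (exp_le_exp.2 (by nlinarith)) 1) hα.le
  · exact le_of_tendsto (tendsto_blockStrategy_proceeds hα hφ)
      (mem_of_superset (Ioc_mem_nhdsGT ht0) fun τ hτ => hb (hblock τ hτ))
end

section
/- Let α > 0, μ̃ > 0, t ∈ (0,1] and φ ≥ 0 satisfy arctanh(√(1 − e^{−2μ̃t}))/√(α·μ̃) ≤ φ. Then the supremum, over all deterministic admissible strategies ζ on [0,t] with initial holdings φ, of ∫₀ᵗ ζ(r)·exp(−μ̃·r − α·∫₀ʳ ζ(v)² dv) dr is equal to √(1 − e^{−2μ̃t})/(2√(α·μ̃)). (This is case (i) of the log-quadratic impact problem, where g(ζ) = α·ζ².) -/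
/-!
Upper bound. With `A r = ∫₀ʳ ζ²`, write the integrand as `(ζ r e^{-α A r}) · e^{-μ r}`
and apply AM–GM with a weight. By the chain rule for the absolutely continuous function
`e^{-2α A}`, `∫₀ᵗ ζ² e^{-2α A} = (1 - e^{-2α A t}) / (2α) ≤ 1 / (2α)`, while
`∫₀ᵗ e^{-2μ r} = (1 - e^{-2μt}) / (2μ)`; the best weight turns the two into
`√(1 - e^{-2μt}) / (2√(αμ))`.

Lower bound. The rate `ζ* r = μ / (√(αμ) √(1 - e^{-2μ(t-r)}))` makes `ζ* r e^{-α A r}`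
proportional to `e^{-μ r}`, the equality case of AM–GM. A primitive of `ζ*` is
`-arctanh √(1 - e^{-2μ(t-r)}) / √(αμ)`, so its total mass is the left side of the budget
condition. As `ζ*` blows up at `t`, it is cut off at `s < t`; the proceeds of the cut-offs tend
to the bound as `s → t`, which is therefore a supremum that is not attained.
-/

noncomputable def Real.arctanh (x : ℝ) : ℝ := (1 / 2) * Real.log ((1 + x) / (1 - x))

open MeasureTheory Set Filter Topology Real

namespace Real

theorem hasDerivAt_arctanh {x : ℝ} (h₁ : -1 < x) (h₂ : x < 1) :
    HasDerivAt arctanh (1 - x ^ 2)⁻¹ x := by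
  have hp : 1 + x ≠ 0 := by linarith
  have hm : 1 - x ≠ 0 := by linarith
  have hpm : 1 - x ^ 2 ≠ 0 := by
    rw [show 1 - x ^ 2 = (1 - x) * (1 + x) by ring]; exact mul_ne_zero hm hp
  refine ((((hasDerivAt_id' x).const_add 1).fun_div ((hasDerivAt_id' x).const_sub 1) hm).log
    (div_ne_zero hp hm)).const_mul (1 / 2) |>.congr_deriv ?_
  field_simp
  ring

theorem arctanh_nonneg {x : ℝ} (h₀ : 0 ≤ x) (h₁ : x < 1) : 0 ≤ arctanh x :=
  mul_nonneg (by norm_num) (log_nonneg ((one_le_div (by linarith)).2 (by linarith)))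

theorem lipschitzOnWith_exp_Iic_zero : LipschitzOnWith 1 exp (Iic 0) :=
  (convex_Iic 0).lipschitzOnWith_of_nnnorm_hasDerivWithin_le
    (fun x _ ↦ (hasDerivAt_exp x).hasDerivWithinAt) fun x hx ↦ by
      rw [← NNReal.coe_le_coe, coe_nnnorm, norm_of_nonneg (exp_pos x).le]
      exact exp_le_one_iff.2 hx

end Real

theorem LipschitzOnWith.comp_absolutelyContinuousOnInterval {X Y : Type*}
    [PseudoMetricSpace X] [PseudoMetricSpace Y] {φ : X → Y} {K : NNReal} {s : Set X}
    {f : ℝ → X} {a b : ℝ} (hφ : LipschitzOnWith K φ s)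
    (hf : AbsolutelyContinuousOnInterval f a b) (hfs : MapsTo f (uIcc a b) s) :
    AbsolutelyContinuousOnInterval (φ ∘ f) a b := by
  unfold AbsolutelyContinuousOnInterval at hf ⊢
  have hK := hf.const_mul (K : ℝ)
  rw [mul_zero] at hK
  refine squeeze_zero' (Eventually.of_forall fun E ↦ Finset.sum_nonneg fun _ _ ↦ dist_nonneg)
    ?_ hK
  filter_upwards [mem_inf_of_right (mem_principal_self _)] with E hE
  rw [Finset.mul_sum]
  exact Finset.sum_le_sum fun i hi ↦
    hφ.dist_le_mul _ (hfs (hE.1 i hi).1) _ (hfs (hE.1 i hi).2)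

theorem intervalIntegrable_of_abs_le {f : ℝ → ℝ} {a b M : ℝ} (hf : Measurable f)
    (hM : ∀ x ∈ uIcc a b, |f x| ≤ M) : IntervalIntegrable f volume a b :=
  (intervalIntegrable_const (c := M)).mono_fun' hf.aestronglyMeasurable <|
    (ae_restrict_iff' measurableSet_uIoc).2 <| Eventually.of_forall fun x hx ↦
      hM x (uIoc_subset_uIcc hx)

theorem integral_mul_le_amgm {f h : ℝ → ℝ} {a b l : ℝ} (hab : a ≤ b) (hl : 0 < l)
    (hfh : IntervalIntegrable (fun x ↦ f x * h x) volume a b)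
    (hf : IntervalIntegrable (fun x ↦ f x ^ 2) volume a b)
    (hh : IntervalIntegrable (fun x ↦ h x ^ 2) volume a b) :
    ∫ x in a..b, f x * h x
      ≤ (l * ∫ x in a..b, f x ^ 2) / 2 + (l⁻¹ * ∫ x in a..b, h x ^ 2) / 2 := by
  have hf' := (hf.const_mul l).div_const 2
  have hh' := (hh.const_mul l⁻¹).div_const 2
  rw [← intervalIntegral.integral_const_mul, ← intervalIntegral.integral_const_mul,
    ← intervalIntegral.integral_div, ← intervalIntegral.integral_div,
    ← intervalIntegral.integral_add hf' hh']
  refine intervalIntegral.integral_mono_on hab hfh (hf'.add hh') fun x _ ↦ ?_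
  have : 0 ≤ l⁻¹ * (l * f x - h x) ^ 2 := by positivity
  field_simp at this ⊢
  nlinarith

theorem integral_mul_exp_neg_integral {g : ℝ → ℝ} {t : ℝ} (ht : 0 ≤ t)
    (hg : IntervalIntegrable g volume 0 t) (hg0 : ∀ x ∈ Icc 0 t, 0 ≤ g x) :
    ∫ r in (0:ℝ)..t, g r * exp (-∫ v in (0:ℝ)..r, g v)
      = 1 - exp (-∫ v in (0:ℝ)..t, g v) := by
  set G := fun x ↦ ∫ v in (0:ℝ)..x, g v
  have hG : AbsolutelyContinuousOnInterval (fun x ↦ -G x) 0 t :=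
    (hg.absolutelyContinuousOnInterval_intervalIntegral left_mem_uIcc).neg
  have hGt : MapsTo (fun x ↦ -G x) (uIcc 0 t) (Iic 0) := fun x hx ↦ by
    rw [uIcc_of_le ht] at hx
    exact neg_nonpos.2 <|
      intervalIntegral.integral_nonneg hx.1 fun v hv ↦ hg0 v ⟨hv.1, hv.2.trans hx.2⟩
  have hH := (lipschitzOnWith_exp_Iic_zero.comp_absolutelyContinuousOnInterval hG
    hGt).integral_deriv_eq_sub
  have hderiv : ∀ᵐ x, x ∈ uIoc 0 t →
      deriv (exp ∘ fun x ↦ -G x) x = -(g x * exp (-G x)) := by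
    filter_upwards [hg.ae_hasDerivAt_integral] with x hx hxt
    have := (hx (uIoc_subset_uIcc hxt) 0 left_mem_uIcc).fun_neg.exp
    rw [Function.comp_def, this.deriv]
    ring
  rw [intervalIntegral.integral_congr_ae hderiv, intervalIntegral.integral_neg] at hH
  simp only [Function.comp_apply, G, intervalIntegral.integral_same, neg_zero,
    exp_zero] at hH
  linarith

theorem integral_exp_neg_two_mul {μ : ℝ} (hμ : μ ≠ 0) (s : ℝ) :
    ∫ r in (0:ℝ)..s, exp (-2 * μ * r) = (1 - exp (-2 * μ * s)) / (2 * μ) := by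
  rw [intervalIntegral.integral_comp_mul_left (fun r ↦ exp r) (by simpa using hμ),
    integral_exp]
  simp only [exp_zero, mul_zero, smul_eq_mul]
  field_simp
  ring

theorem integral_sq_mul_exp_neg_integral_sq_le {α t : ℝ} {ζ : ℝ → ℝ} (hα : 0 < α)
    (ht : 0 ≤ t) (hζ : IntervalIntegrable (fun r ↦ ζ r ^ 2) volume 0 t) :
    ∫ r in (0:ℝ)..t, (ζ r * exp (-(α * ∫ v in (0:ℝ)..r, ζ v ^ 2))) ^ 2
      ≤ (2 * α)⁻¹ := by
  have h2α : 0 < (2 * α)⁻¹ := by positivity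
  have hchain := integral_mul_exp_neg_integral ht (hζ.const_mul (2 * α)) fun x _ ↦ by positivity
  calc ∫ r in (0:ℝ)..t, (ζ r * exp (-(α * ∫ v in (0:ℝ)..r, ζ v ^ 2))) ^ 2
      = (2 * α)⁻¹ * ∫ r in (0:ℝ)..t,
          2 * α * ζ r ^ 2 * exp (-∫ v in (0:ℝ)..r, 2 * α * ζ v ^ 2) := by
        rw [← intervalIntegral.integral_const_mul]
        refine intervalIntegral.integral_congr fun r _ ↦ ?_
        simp only [intervalIntegral.integral_const_mul, mul_pow, ← exp_nat_mul]
        field_simp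
        ring_nf
    _ = (2 * α)⁻¹ * (1 - exp (-∫ v in (0:ℝ)..t, 2 * α * ζ v ^ 2)) := by rw [hchain]
    _ ≤ (2 * α)⁻¹ := mul_le_of_le_one_right h2α.le (sub_le_self _ (exp_pos _).le)

noncomputable def proceeds (α μ t : ℝ) (ζ : ℝ → ℝ) : ℝ :=
  ∫ r in (0:ℝ)..t, ζ r * exp (-μ * r - α * ∫ v in (0:ℝ)..r, ζ v ^ 2)

def IsAdmissible (t φ : ℝ) (ζ : ℝ → ℝ) : Prop :=
  Measurable ζ ∧ (∃ M, ∀ r ∈ Icc 0 t, ζ r ≤ M) ∧ (∀ r ∈ Icc 0 t, 0 ≤ ζ r) ∧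
    ∫ r in (0:ℝ)..t, ζ r ≤ φ

theorem proceeds_le_of_intervalIntegrable {α μ t : ℝ} (hα : 0 < α) (hμ : 0 < μ) (ht : 0 < t)
    {ζ : ℝ → ℝ} (hζ : IntervalIntegrable ζ volume 0 t)
    (hζ2 : IntervalIntegrable (fun r ↦ ζ r ^ 2) volume 0 t) :
    proceeds α μ t ζ ≤ √(1 - exp (-2 * μ * t)) / (2 * √(α * μ)) := by
  set A := fun r ↦ ∫ v in (0:ℝ)..r, ζ v ^ 2
  have hA : ContinuousOn (fun r ↦ exp (-(α * A r))) (uIcc 0 t) :=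
    continuous_exp.comp_continuousOn
      ((intervalIntegral.continuousOn_primitive_interval' hζ2 left_mem_uIcc).const_smul α).neg
  have hfh :
      IntervalIntegrable (fun r ↦ ζ r * exp (-(α * A r)) * exp (-μ * r)) volume 0 t := by
    simpa only [mul_assoc, Pi.mul_apply] using
      hζ.mul_continuousOn (hA.mul (Continuous.continuousOn (by fun_prop)))
  have hf2 : IntervalIntegrable (fun r ↦ (ζ r * exp (-(α * A r))) ^ 2) volume 0 t := by
    simpa only [mul_pow, Pi.pow_apply] using hζ2.mul_continuousOn (hA.pow 2)
  have hexp : ∫ r in (0:ℝ)..t, exp (-μ * r) ^ 2 = (1 - exp (-2 * μ * t)) / (2 * μ) := by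
    simp_rw [← exp_nat_mul]
    push_cast
    simp_rw [← mul_assoc, show (2:ℝ) * -μ = -2 * μ by ring]
    exact integral_exp_neg_two_mul hμ.ne' t
  set E := 1 - exp (-2 * μ * t)
  have hE : 0 < E := sub_pos.2 (exp_lt_one_iff.2 (by nlinarith))
  set T := √E / (2 * √(α * μ))
  have hl : 0 < 2 * α * T := by positivity
  calc proceeds α μ t ζ
      = ∫ r in (0:ℝ)..t, ζ r * exp (-(α * A r)) * exp (-μ * r) :=
        intervalIntegral.integral_congr fun r _ ↦ by
          simp only [A]; rw [mul_assoc, ← exp_add]; ring_nf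
    _ ≤ (2 * α * T * ∫ r in (0:ℝ)..t, (ζ r * exp (-(α * A r))) ^ 2) / 2
          + ((2 * α * T)⁻¹ * ∫ r in (0:ℝ)..t, exp (-μ * r) ^ 2) / 2 :=
        integral_mul_le_amgm ht.le hl hfh hf2
          ((by fun_prop : Continuous _).intervalIntegrable _ _)
    _ ≤ (2 * α * T * (2 * α)⁻¹) / 2 + ((2 * α * T)⁻¹ * (E / (2 * μ))) / 2 := by
        rw [hexp]
        gcongr
        exact integral_sq_mul_exp_neg_integral_sq_le hα ht.le hζ2
    _ = T := by
        have hαμ : √(α * μ) ^ 2 = α * μ := Real.sq_sqrt (by positivity)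
        have hE2 : √E ^ 2 = E := Real.sq_sqrt hE.le
        have : 0 < √E := Real.sqrt_pos.2 hE
        have : 0 < √(α * μ) := by positivity
        simp only [T]
        field_simp
        nlinarith

theorem proceeds_le {α μ t : ℝ} (hα : 0 < α) (hμ : 0 < μ) (ht : 0 < t) {ζ : ℝ → ℝ}
    (hζ : Measurable ζ) {M : ℝ} (hM : ∀ r ∈ Icc 0 t, ζ r ≤ M)
    (hζ0 : ∀ r ∈ Icc 0 t, 0 ≤ ζ r) :
    proceeds α μ t ζ ≤ √(1 - exp (-2 * μ * t)) / (2 * √(α * μ)) := by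
  rw [← uIcc_of_le ht.le] at hM hζ0
  refine proceeds_le_of_intervalIntegrable hα hμ ht
    (intervalIntegrable_of_abs_le hζ fun x hx ↦ abs_le.2 ⟨?_, hM x hx⟩)
    (intervalIntegrable_of_abs_le (M := M ^ 2) (hζ.pow_const 2) fun x hx ↦ ?_)
  · linarith [hζ0 x hx, hM x hx]
  · rw [abs_of_nonneg (sq_nonneg _)]
    exact pow_le_pow_left₀ (hζ0 x hx) (hM x hx) 2

theorem hasDerivAt_one_sub_exp (μ t r : ℝ) :
    HasDerivAt (fun r ↦ 1 - exp (-2 * μ * (t - r))) (-(2 * μ * exp (-2 * μ * (t - r)))) r := by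
  refine (((hasDerivAt_id' r).const_sub t).const_mul (-2 * μ)).exp.const_sub 1 |>.congr_deriv ?_
  ring

section OptimalStrategy

variable {α μ t : ℝ}

theorem one_sub_exp_pos (hμ : 0 < μ) {r : ℝ} (hr : r < t) :
    0 < 1 - exp (-2 * μ * (t - r)) :=
  sub_pos.2 (exp_lt_one_iff.2 (by nlinarith))

noncomputable def optimalRate (α μ t r : ℝ) : ℝ :=
  μ / (√(α * μ) * √(1 - exp (-2 * μ * (t - r))))

theorem continuousOn_optimalRate (hα : 0 < α) (hμ : 0 < μ) :
    ContinuousOn (optimalRate α μ t) (Iio t) :=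
  continuousOn_const.div (Continuous.continuousOn (by fun_prop)) fun r hr ↦
    (mul_pos (Real.sqrt_pos.2 (mul_pos hα hμ)) (Real.sqrt_pos.2 (one_sub_exp_pos hμ hr))).ne'

theorem hasDerivAt_arctanh_sqrt_one_sub_exp (hμ : 0 < μ) {r : ℝ} (hr : r < t) :
    HasDerivAt (fun r ↦ arctanh √(1 - exp (-2 * μ * (t - r))))
      (-(μ / √(1 - exp (-2 * μ * (t - r))))) r := by
  have hD := one_sub_exp_pos hμ hr
  have hsD : √(1 - exp (-2 * μ * (t - r))) < 1 :=
    (Real.sqrt_lt' one_pos).2 (by linarith [exp_pos (-2 * μ * (t - r))])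
  have hsD₀ := Real.sqrt_nonneg (1 - exp (-2 * μ * (t - r)))
  refine (Real.hasDerivAt_arctanh (by linarith) hsD).comp r
    ((hasDerivAt_one_sub_exp μ t r).sqrt hD.ne') |>.congr_deriv ?_
  rw [Real.sq_sqrt hD.le, sub_sub_cancel]
  have := Real.sqrt_pos.2 hD
  field_simp

theorem hasDerivAt_optimalRate_primitive (hμ : 0 < μ) {r : ℝ} (hr : r < t) :
    HasDerivAt (fun r ↦ -arctanh √(1 - exp (-2 * μ * (t - r))) / √(α * μ))
      (optimalRate α μ t r) r :=
  (hasDerivAt_arctanh_sqrt_one_sub_exp hμ hr).fun_neg.div_const _ |>.congr_deriv <| by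
    rw [optimalRate, neg_neg, div_div, mul_comm]

theorem hasDerivAt_optimalRate_sq_primitive (hα : 0 < α) (hμ : 0 < μ) {r : ℝ} (hr : r < t) :
    HasDerivAt (fun r ↦ (μ * r - log (1 - exp (-2 * μ * (t - r))) / 2) / α)
      (optimalRate α μ t r ^ 2) r := by
  have hD := one_sub_exp_pos hμ hr
  refine ((((hasDerivAt_id' r).const_mul μ).sub
    (((hasDerivAt_one_sub_exp μ t r).log hD.ne').div_const 2)).div_const α).congr_deriv ?_
  rw [optimalRate, div_pow, mul_pow, Real.sq_sqrt (by positivity), Real.sq_sqrt hD.le]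
  generalize exp (-2 * μ * (t - r)) = e at hD ⊢
  field_simp
  ring

theorem integral_optimalRate (hα : 0 < α) (hμ : 0 < μ) {s : ℝ} (hs : 0 ≤ s) (hst : s < t) :
    ∫ r in (0:ℝ)..s, optimalRate α μ t r
      = (arctanh √(1 - exp (-2 * μ * t))
          - arctanh √(1 - exp (-2 * μ * (t - s)))) / √(α * μ) := by
  have hsub : uIcc 0 s ⊆ Iio t := fun r hr ↦ (uIcc_of_le hs ▸ hr).2.trans_lt hst
  rw [intervalIntegral.integral_eq_sub_of_hasDerivAt
    (fun r hr ↦ hasDerivAt_optimalRate_primitive hμ (hsub hr))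
    ((continuousOn_optimalRate hα hμ).mono hsub).intervalIntegrable, sub_zero]
  ring

theorem integral_optimalRate_sq (hα : 0 < α) (hμ : 0 < μ) {r : ℝ} (hr : 0 ≤ r)
    (hrt : r < t) :
    α * ∫ v in (0:ℝ)..r, optimalRate α μ t v ^ 2
      = μ * r + log ((1 - exp (-2 * μ * t)) / (1 - exp (-2 * μ * (t - r)))) / 2 := by
  have hsub : uIcc 0 r ⊆ Iio t := fun v hv ↦ (uIcc_of_le hr ▸ hv).2.trans_lt hrt
  have hE := one_sub_exp_pos hμ (hr.trans_lt hrt)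
  rw [sub_zero] at hE
  rw [intervalIntegral.integral_eq_sub_of_hasDerivAt
    (fun v hv ↦ hasDerivAt_optimalRate_sq_primitive hα hμ (hsub hv))
    (((continuousOn_optimalRate hα hμ).pow 2).mono hsub).intervalIntegrable, sub_zero,
    log_div hE.ne' (one_sub_exp_pos hμ hrt).ne']
  field_simp
  ring

theorem optimalRate_mul_exp (hα : 0 < α) (hμ : 0 < μ) {r : ℝ} (hr : 0 ≤ r) (hrt : r < t) :
    optimalRate α μ t r * exp (-μ * r - α * ∫ v in (0:ℝ)..r, optimalRate α μ t v ^ 2)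
      = μ / (√(α * μ) * √(1 - exp (-2 * μ * t))) * exp (-2 * μ * r) := by
  have hE := one_sub_exp_pos hμ (hr.trans_lt hrt)
  have hD := one_sub_exp_pos hμ hrt
  rw [sub_zero] at hE
  obtain ⟨q, hq⟩ : ∃ q, q = (1 - exp (-2 * μ * t)) / (1 - exp (-2 * μ * (t - r))) :=
    ⟨_, rfl⟩
  rw [integral_optimalRate_sq hα hμ hr hrt, ← hq,
    show -μ * r - (μ * r + log q / 2) = -2 * μ * r - log q / 2 by ring, exp_sub, exp_half,
    exp_log (hq ▸ div_pos hE hD), hq, Real.sqrt_div' _ hD.le, optimalRate]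
  have hsD := Real.sqrt_pos.2 hD
  generalize √(1 - exp (-2 * μ * (t - r))) = d at hsD ⊢
  field_simp

theorem measurable_optimalRate : Measurable (optimalRate α μ t) := by
  unfold optimalRate; fun_prop

theorem optimalRate_nonneg (hμ : 0 ≤ μ) (r : ℝ) : 0 ≤ optimalRate α μ t r := by
  unfold optimalRate; positivity

theorem optimalRate_le_optimalRate (hα : 0 < α) (hμ : 0 < μ) {r s : ℝ} (hrs : r ≤ s)
    (hst : s < t) :
    optimalRate α μ t r ≤ optimalRate α μ t s := by
  have hD := one_sub_exp_pos hμ hst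
  refine div_le_div_of_nonneg_left hμ.le (by positivity) (mul_le_mul_of_nonneg_left
    (Real.sqrt_le_sqrt (sub_le_sub_left (exp_le_exp.2 (by nlinarith)) 1)) (by positivity))

theorem isAdmissible_indicator_optimalRate {φ : ℝ} (hα : 0 < α) (hμ : 0 < μ) {s : ℝ}
    (hs : 0 ≤ s) (hst : s < t) (hφ : arctanh √(1 - exp (-2 * μ * t)) / √(α * μ) ≤ φ) :
    IsAdmissible t φ ((Iic s).indicator (optimalRate α μ t)) := by
  refine ⟨measurable_optimalRate.indicator measurableSet_Iic,
    ⟨optimalRate α μ t s, fun r _ ↦ ?_⟩,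
    fun r _ ↦ indicator_nonneg (fun r _ ↦ optimalRate_nonneg hμ.le r) r, ?_⟩
  · by_cases hrs : r ∈ Iic s
    · rw [indicator_of_mem hrs]
      exact optimalRate_le_optimalRate hα hμ hrs hst
    · rw [indicator_of_notMem hrs]
      exact optimalRate_nonneg hμ.le s
  rw [← Iic_def, intervalIntegral.integral_indicator ⟨hs, hst.le⟩,
    integral_optimalRate hα hμ hs hst]
  refine le_trans (div_le_div_of_nonneg_right (sub_le_self _ (Real.arctanh_nonneg
    (Real.sqrt_nonneg _) ((Real.sqrt_lt' one_pos).2 ?_))) (Real.sqrt_nonneg _)) hφ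
  linarith [exp_pos (-2 * μ * (t - s))]

theorem proceeds_indicator_optimalRate (hα : 0 < α) (hμ : 0 < μ) {s : ℝ} (hs : 0 ≤ s)
    (hst : s < t) :
    proceeds α μ t ((Iic s).indicator (optimalRate α μ t))
      = μ / (√(α * μ) * √(1 - exp (-2 * μ * t)))
          * ((1 - exp (-2 * μ * s)) / (2 * μ)) := by
  have hpt : ∀ r ∈ uIcc 0 t, (Iic s).indicator (optimalRate α μ t) r
      * exp (-μ * r - α * ∫ v in (0:ℝ)..r, (Iic s).indicator (optimalRate α μ t) v ^ 2)
      = (Iic s).indicator (fun r ↦ μ / (√(α * μ) * √(1 - exp (-2 * μ * t)))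
          * exp (-2 * μ * r)) r := by
    intro r hr
    by_cases hrs : r ∈ Iic s
    · have hr0 : 0 ≤ r := (uIcc_of_le (hs.trans hst.le) ▸ hr).1
      have hsq : ∫ v in (0:ℝ)..r, (Iic s).indicator (optimalRate α μ t) v ^ 2
          = ∫ v in (0:ℝ)..r, optimalRate α μ t v ^ 2 :=
        intervalIntegral.integral_congr fun v hv ↦ by
          rw [indicator_of_mem ((uIcc_of_le hr0 ▸ hv).2.trans hrs)]
      rw [indicator_of_mem hrs, indicator_of_mem hrs, hsq,
        optimalRate_mul_exp hα hμ hr0 (lt_of_le_of_lt hrs hst)]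
    · rw [indicator_of_notMem hrs, indicator_of_notMem hrs, zero_mul]
  rw [proceeds, intervalIntegral.integral_congr hpt, ← Iic_def,
    intervalIntegral.integral_indicator ⟨hs, hst.le⟩, intervalIntegral.integral_const_mul,
    integral_exp_neg_two_mul hμ.ne']

theorem tendsto_proceeds_indicator_optimalRate (hα : 0 < α) (hμ : 0 < μ) (ht : 0 < t) :
    Tendsto (fun s ↦ proceeds α μ t ((Iic s).indicator (optimalRate α μ t))) (𝓝[<] t)
      (𝓝 (√(1 - exp (-2 * μ * t)) / (2 * √(α * μ)))) := by
  have hlim : Tendsto (fun s ↦ μ / (√(α * μ) * √(1 - exp (-2 * μ * t)))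
      * ((1 - exp (-2 * μ * s)) / (2 * μ))) (𝓝[<] t)
      (𝓝 (μ / (√(α * μ) * √(1 - exp (-2 * μ * t)))
        * ((1 - exp (-2 * μ * t)) / (2 * μ)))) :=
    ((by fun_prop : Continuous _).tendsto t).mono_left nhdsWithin_le_nhds
  refine (hlim.congr' ?_).trans_eq ?_
  · filter_upwards [Ioo_mem_nhdsLT ht] with s hs
    exact (proceeds_indicator_optimalRate hα hμ hs.1.le hs.2).symm
  · have hE : 0 < 1 - exp (-2 * μ * t) := by simpa using one_sub_exp_pos hμ ht
    have hE2 := Real.sq_sqrt hE.le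
    have hsE := Real.sqrt_pos.2 hE
    have := Real.sqrt_pos.2 (mul_pos hα hμ)
    generalize √(1 - exp (-2 * μ * t)) = e at hE2 hsE ⊢
    rw [← hE2]
    field_simp

end OptimalStrategy

theorem logQuadratic_value_case_i_general (α μ t φ : ℝ) (hα : 0 < α) (hμ : 0 < μ)
    (ht : t ∈ Set.Ioc (0 : ℝ) 1)
    (hcond : Real.arctanh (Real.sqrt (1 - Real.exp (-2 * μ * t))) /
        Real.sqrt (α * μ) ≤ φ) :
    sSup {y : ℝ | ∃ ζ : ℝ → ℝ, Measurable ζ ∧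
        (∃ M : ℝ, ∀ r ∈ Set.Icc (0 : ℝ) t, ζ r ≤ M) ∧
        (∀ r ∈ Set.Icc (0 : ℝ) t, 0 ≤ ζ r) ∧
        (∫ r in (0 : ℝ)..t, ζ r) ≤ φ ∧
        y = ∫ r in (0 : ℝ)..t,
              ζ r * Real.exp (-μ * r - α * ∫ v in (0 : ℝ)..r, ζ v ^ 2)}
      = Real.sqrt (1 - Real.exp (-2 * μ * t)) / (2 * Real.sqrt (α * μ)) := by
  obtain ⟨ht0, -⟩ := ht
  have hadm := fun s (hs : s ∈ Ioo 0 t) ↦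
    isAdmissible_indicator_optimalRate hα hμ hs.1.le hs.2 hcond
  refine IsLUB.csSup_eq ⟨?_, fun b hb ↦ ?_⟩ ?_
  · rintro y ⟨ζ, hζ, ⟨M, hM⟩, hζ0, -, rfl⟩
    exact proceeds_le hα hμ ht0 hζ hM hζ0
  · refine le_of_tendsto (tendsto_proceeds_indicator_optimalRate hα hμ ht0) ?_
    filter_upwards [Ioo_mem_nhdsLT ht0] with s hs
    obtain ⟨hm, hM, h0, hφ⟩ := hadm s hs
    exact hb ⟨_, hm, hM, h0, hφ, rfl⟩
  · obtain ⟨hm, hM, h0, hφ⟩ := hadm (t / 2) ⟨half_pos ht0, half_lt_self ht0⟩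
    exact ⟨_, _, hm, hM, h0, hφ, rfl⟩

/-- case (i) of the log-quadratic impact problem `g(ζ) = α ζ²`:
if `arctanh (√(1 - e^{-2 μ t})) / √(α μ) ≤ φ`, the supremum over deterministic
admissible strategies of the discounted proceeds equals
`√(1 - e^{-2 μ t}) / (2 √(α μ))`. -/
theorem logQuadratic_value_case_i (α μ t φ : ℝ) (hα : 0 < α) (hμ : 0 < μ)
    (ht : t ∈ Set.Ioc (0 : ℝ) 1) (hφ : 0 ≤ φ)
    (hcond : Real.arctanh (Real.sqrt (1 - Real.exp (-2 * μ * t))) /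
        Real.sqrt (α * μ) ≤ φ) :
    sSup {y : ℝ | ∃ ζ : ℝ → ℝ, Measurable ζ ∧
        (∃ M : ℝ, ∀ r ∈ Set.Icc (0 : ℝ) t, ζ r ≤ M) ∧
        (∀ r ∈ Set.Icc (0 : ℝ) t, 0 ≤ ζ r) ∧
        (∫ r in (0 : ℝ)..t, ζ r) ≤ φ ∧
        y = ∫ r in (0 : ℝ)..t,
              ζ r * Real.exp (-μ * r - α * ∫ v in (0 : ℝ)..r, ζ v ^ 2)}
      = Real.sqrt (1 - Real.exp (-2 * μ * t)) / (2 * Real.sqrt (α * μ)) :=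
  logQuadratic_value_case_i_general α μ t φ hα hμ ht hcond
end

section
/- (Gronwall-type lemma with finitely many discontinuities.) Let 0 ≤ t₀ ≤ t₁ ≤ ⋯ ≤ t_k ≤ 1 and let f : [0,1] → [0,∞) be a Borel measurable integrable function which is continuous on [0,1] \ {t₀, …, t_k}. Suppose there exist a Borel measurable function γ : [0,1] → [0,∞) and a constant β > 0 such that f(t) ≤ γ(t) + β·∫₀ᵗ f(r) dr for all t ∈ [0,1]. Then f(t) ≤ γ(t) + β·∫₀ᵗ γ(r)·e^{β(t−r)} dr for all t ∈ [0,1]. -/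
/-!
Put `u s = ∫₀ˢ f`. The weighted primitive `s ↦ e^{-βs} u s` is absolutely continuous with a.e.
derivative `e^{-βs} (f s - β u s) ≤ e^{-βs} γ s`, so integrating over `[0, t]` gives
`u t ≤ ∫₀ᵗ γ r e^{β(t-r)} dr`; substituting this into `f t ≤ γ t + β u t` gives the claim.
-/

open MeasureTheory Set Real

section

variable {f γ : ℝ → ℝ} {a b β : ℝ}

theorem integral_exp_mul_sub_mul_primitive (hf : IntervalIntegrable f volume a b) :
    ∫ s in a..b, exp (-β * s) * (f s - β * ∫ r in a..s, f r) =
      exp (-β * b) * ∫ r in a..b, f r := by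
  have hu := hf.absolutelyContinuousOnInterval_intervalIntegral (c := a) left_mem_uIcc
  have hexp : AbsolutelyContinuousOnInterval (fun s => exp (-β * s)) a b :=
    (by fun_prop : ContDiff ℝ 1 fun s => exp (-β * s)).contDiffOn.absolutelyContinuousOnInterval
  have hparts := hexp.integral_deriv_mul_eq_sub hu
  simp only [intervalIntegral.integral_same, mul_zero, sub_zero] at hparts
  rw [← hparts]
  refine intervalIntegral.integral_congr_ae ?_
  filter_upwards [hf.ae_hasDerivAt_integral] with s hs hsab
  have hderiv_u := (hs (uIoc_subset_uIcc hsab) a left_mem_uIcc).deriv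
  have hderiv_exp : deriv (fun s => exp (-β * s)) s = -β * exp (-β * s) := by
    simpa using ((hasDerivAt_id' s).const_mul (-β)).exp.deriv.trans (mul_comm _ _)
  rw [hderiv_u, hderiv_exp]
  ring

theorem integral_le_integral_mul_exp_of_le_add_mul_integral (hab : a ≤ b)
    (hf : IntervalIntegrable f volume a b) (hγ : IntervalIntegrable γ volume a b)
    (hle : ∀ᵐ s, s ∈ Icc a b → f s ≤ γ s + β * ∫ r in a..s, f r) :
    ∫ s in a..b, f s ≤ ∫ s in a..b, γ s * exp (β * (b - s)) := by
  have hexp : ContinuousOn (fun s => exp (-β * s)) (uIcc a b) := by fun_prop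
  have hu : ContinuousOn (fun s => ∫ r in a..s, f r) (uIcc a b) :=
    intervalIntegral.continuousOn_primitive_interval' hf left_mem_uIcc
  have hweighted : exp (-β * b) * ∫ s in a..b, f s ≤ ∫ s in a..b, exp (-β * s) * γ s := by
    rw [← integral_exp_mul_sub_mul_primitive hf]
    refine intervalIntegral.integral_mono_ae_restrict hab
      ((hf.sub (hu.intervalIntegrable.const_mul β)).continuousOn_mul hexp)
      (hγ.continuousOn_mul hexp) ?_
    filter_upwards [(ae_restrict_iff' measurableSet_Icc).2 hle] with s hs
    exact mul_le_mul_of_nonneg_left (by linarith) (exp_pos _).le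
  calc ∫ s in a..b, f s = exp (β * b) * (exp (-β * b) * ∫ s in a..b, f s) := by
        rw [← mul_assoc, ← exp_add]; simp
    _ ≤ exp (β * b) * ∫ s in a..b, exp (-β * s) * γ s := by gcongr
    _ = ∫ s in a..b, γ s * exp (β * (b - s)) := by
        rw [← intervalIntegral.integral_const_mul]
        congr 1 with s
        rw [← mul_assoc, ← exp_add, mul_comm]
        ring_nf

theorem integrableOn_of_integrableOn_mul_exp_sub
    (hγ : AEStronglyMeasurable γ (volume.restrict (Ioc a b)))
    (hγ_nonneg : ∀ r ∈ Ioc a b, 0 ≤ γ r) (hβ : 0 ≤ β)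
    (h : IntegrableOn (fun r => γ r * exp (β * (b - r))) (Ioc a b)) :
    IntegrableOn γ (Ioc a b) := by
  refine h.mono' hγ (ae_restrict_of_forall_mem measurableSet_Ioc fun r hr => ?_)
  rw [Real.norm_of_nonneg (hγ_nonneg r hr)]
  exact le_mul_of_one_le_right (hγ_nonneg r hr) (one_le_exp (mul_nonneg hβ (sub_nonneg.2 hr.2)))

end

theorem gronwall_with_jumps_general
    (f γ : ℝ → ℝ) (hγ_meas : Measurable γ)
    (hf_int : MeasureTheory.IntegrableOn f (Set.Icc 0 1))
    (hγ_nonneg : ∀ t ∈ Set.Icc (0 : ℝ) 1, 0 ≤ γ t)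
    (β : ℝ) (hβ : 0 < β)
    (hineq : ∀ t ∈ Set.Icc (0 : ℝ) 1, f t ≤ γ t + β * ∫ r in (0 : ℝ)..t, f r) :
    ∀ t ∈ Set.Icc (0 : ℝ) 1,
      ENNReal.ofReal (f t) ≤ ENNReal.ofReal (γ t) +
        ENNReal.ofReal β *
          ∫⁻ r in Set.Ioc (0 : ℝ) t, ENNReal.ofReal (γ r * Real.exp (β * (t - r))) := by
  intro t ht
  have hsub : Icc 0 t ⊆ Icc (0 : ℝ) 1 := Icc_subset_Icc_right ht.2
  have hg_nonneg : 0 ≤ᵐ[volume.restrict (Ioc 0 t)] fun r => γ r * exp (β * (t - r)) :=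
    ae_restrict_of_forall_mem measurableSet_Ioc fun r hr =>
      mul_nonneg (hγ_nonneg r (hsub (Ioc_subset_Icc_self hr))) (exp_pos _).le
  by_cases hfinite : ∫⁻ r in Ioc 0 t, ENNReal.ofReal (γ r * exp (β * (t - r))) = ⊤
  · simp [hfinite, ENNReal.mul_top, hβ]
  have hg_int : IntegrableOn (fun r => γ r * exp (β * (t - r))) (Ioc 0 t) :=
    ⟨(hγ_meas.mul (by fun_prop)).aestronglyMeasurable,
      (hasFiniteIntegral_iff_ofReal hg_nonneg).2 (lt_top_iff_ne_top.2 hfinite)⟩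
  have hγ_int : IntegrableOn γ (Ioc 0 t) := integrableOn_of_integrableOn_mul_exp_sub
    hγ_meas.aestronglyMeasurable (fun r hr => hγ_nonneg r (hsub (Ioc_subset_Icc_self hr))) hβ.le
    hg_int
  have hprimitive := integral_le_integral_mul_exp_of_le_add_mul_integral ht.1
    ((intervalIntegrable_iff_integrableOn_Icc_of_le ht.1).2 (hf_int.mono_set hsub))
    ((intervalIntegrable_iff_integrableOn_Ioc_of_le ht.1).2 hγ_int)
    (ae_of_all _ fun r hr => hineq r (hsub hr))
  rw [← ofReal_integral_eq_lintegral_ofReal hg_int hg_nonneg, ← ENNReal.ofReal_mul hβ.le,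
    ← ENNReal.ofReal_add (hγ_nonneg t ht) (mul_nonneg hβ.le (integral_nonneg_of_ae hg_nonneg))]
  refine ENNReal.ofReal_le_ofReal ((hineq t ht).trans ?_)
  rw [← intervalIntegral.integral_of_le ht.1]
  gcongr

/-- a Gronwall-type lemma for a nonnegative integrable function `f`
on `[0,1]` which is continuous off the finitely many points `ts 0 ≤ ⋯ ≤ ts k`:
if `f t ≤ γ t + β ∫₀ᵗ f` on `[0,1]` for a nonnegative Borel `γ` and `β > 0`, then
`f t ≤ γ t + β ∫₀ᵗ γ r · e^{β (t-r)} dr` (the latter integral taken in `[0,∞]`,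
as `γ` need not be integrable). -/
theorem gronwall_with_jumps (k : ℕ) (ts : Fin (k + 1) → ℝ) (hts : Monotone ts)
    (hts0 : 0 ≤ ts 0) (hts1 : ts (Fin.last k) ≤ 1)
    (f γ : ℝ → ℝ) (hf_meas : Measurable f) (hγ_meas : Measurable γ)
    (hf_int : MeasureTheory.IntegrableOn f (Set.Icc 0 1))
    (hf_nonneg : ∀ t ∈ Set.Icc (0 : ℝ) 1, 0 ≤ f t)
    (hγ_nonneg : ∀ t ∈ Set.Icc (0 : ℝ) 1, 0 ≤ γ t)
    (hf_cont : ContinuousOn f (Set.Icc 0 1 \ Set.range ts))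
    (β : ℝ) (hβ : 0 < β)
    (hineq : ∀ t ∈ Set.Icc (0 : ℝ) 1, f t ≤ γ t + β * ∫ r in (0 : ℝ)..t, f r) :
    ∀ t ∈ Set.Icc (0 : ℝ) 1,
      ENNReal.ofReal (f t) ≤ ENNReal.ofReal (γ t) +
        ENNReal.ofReal β *
          ∫⁻ r in Set.Ioc (0 : ℝ) t, ENNReal.ofReal (γ r * Real.exp (β * (t - r))) :=
  gronwall_with_jumps_general f γ hγ_meas hf_int hγ_nonneg β hβ hineq
end

section
/- Let h : [0,∞) → [0,∞) be nondecreasing and continuous with lim_{ζ→∞} h(ζ) = ∞, let g(ζ) = ∫₀^ζ h(ζ') dζ', and let Φ₀ > 0. Then there exists a continuous function φ : (0,1] → [0,∞), depending only on h and Φ₀, with lim_{r↓0} φ(r) = 0, such that for every t ∈ (0,1], every bounded Borel measurable ζ : [0,t] → [0,∞) with ∫₀ᵗ ζ(v) dv ≤ Φ₀, and every r ∈ (0,t], one has ∫₀ʳ exp( −∫₀ᵛ g(ζ(v')) dv' )·ζ(v) dv ≤ φ(r). -/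
/-!
Fix a threshold `K ≥ 0` with `c = h K > 0`. Since `h` is nondecreasing, `g y ≥ c (y - K)` for
`y ≥ 0`, so with `Z` the primitive of `ζ`, `∫₀ᵛ g (ζ) ≥ c Z v - c K r` for `v ≤ r`. The function
`exp (-c Z) ζ` is a.e. the derivative of the monotone function `-exp (-c Z) / c`, so its integral
is at most `1 / c`; hence the discounted sales up to `r` are at most `exp (c K r) / c`. The
infimum `ψ r` of these bounds over `K` is monotone and tends to `0` as `r ↓ 0` because `h` is
unbounded, and the mean of `ψ` over `[r, 2r]` is a continuous majorant with the same limit.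
-/

open MeasureTheory Set intervalIntegral Real Filter Topology
open scoped Interval

theorem monotoneOn_integral_of_nonneg {ξ : ℝ → ℝ} {r : ℝ}
    (hξ : IntervalIntegrable ξ volume 0 r) (hξ0 : ∀ x ∈ Icc 0 r, 0 ≤ ξ x) :
    MonotoneOn (fun y => ∫ x in 0..y, ξ x) (Icc 0 r) := fun x hx y hy hxy =>
  integral_mono_interval le_rfl hx.1 hxy
    ((ae_restrict_mem measurableSet_Ioc).mono fun v hv => hξ0 v ⟨hv.1.le, hv.2.trans hy.2⟩)
    (hξ.mono_set (by
      rw [uIcc_of_le hy.1, uIcc_of_le (hy.1.trans hy.2)]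
      exact Icc_subset_Icc_right hy.2))

theorem integral_exp_neg_mul_integral_mul_le {ξ : ℝ → ℝ} {c r : ℝ} (hc : 0 < c) (hr : 0 ≤ r)
    (hξ : IntervalIntegrable ξ volume 0 r) (hξ0 : ∀ x ∈ Icc 0 r, 0 ≤ ξ x) :
    ∫ v in 0..r, exp (-(c * ∫ x in 0..v, ξ x)) * ξ v ≤ 1 / c := by
  set Z := fun v => ∫ x in 0..v, ξ x
  set F := fun v => -exp (-(c * Z v)) / c
  have hF : MonotoneOn F [[0, r]] := by
    rw [uIcc_of_le hr]
    intro x hx y hy hxy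
    have := monotoneOn_integral_of_nonneg hξ hξ0 hx hy hxy
    simp only [F]
    gcongr
  have hderiv : ∀ᵐ v, v ∈ Ι 0 r → deriv F v = exp (-(c * Z v)) * ξ v := by
    filter_upwards [hξ.ae_hasDerivAt_integral] with v hv hvI
    have hZ := hv (uIoc_subset_uIcc hvI) 0 left_mem_uIcc
    have hFv : HasDerivAt F (-(exp (-(c * Z v)) * -(c * ξ v)) / c) v :=
      (hZ.const_mul c).neg.exp.neg.div_const c
    rw [hFv.deriv]
    field_simp
  calc ∫ v in 0..r, exp (-(c * Z v)) * ξ v = ∫ v in 0..r, deriv F v :=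
        integral_congr_ae (hderiv.mono fun v h hv => (h hv).symm)
    _ ≤ max 0 (F r - F 0) := hF.intervalIntegral_deriv_mem_uIcc.2
    _ ≤ 1 / c := by
        refine max_le (by positivity) ?_
        simp only [F, Z, integral_same, mul_zero, neg_zero, exp_zero]
        have := exp_pos (-(c * ∫ x in 0..r, ξ x))
        rw [div_sub_div_same, div_le_div_iff_of_pos_right hc]
        linarith

theorem integral_exp_neg_integral_mul_le {G ζ : ℝ → ℝ} {c K r : ℝ} (hc : 0 < c) (hK : 0 ≤ K)
    (hr : 0 ≤ r) (hG : IntervalIntegrable G volume 0 r) (hζ : IntervalIntegrable ζ volume 0 r)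
    (hζ0 : ∀ x ∈ Icc 0 r, 0 ≤ ζ x) (hGζ : ∀ x ∈ Icc 0 r, c * (ζ x - K) ≤ G x) :
    ∫ v in 0..r, exp (-∫ x in 0..v, G x) * ζ v ≤ exp (c * K * r) / c := by
  have hlow : ∀ v ∈ Icc 0 r, c * (∫ x in 0..v, ζ x) - c * K * r ≤ ∫ x in 0..v, G x := by
    intro v hv
    have hsub : [[0, v]] ⊆ [[0, r]] :=
      uIcc_subset_uIcc left_mem_uIcc (mem_uIcc_of_le hv.1 hv.2)
    have hζv := hζ.mono_set hsub
    calc c * (∫ x in 0..v, ζ x) - c * K * r ≤ c * (∫ x in 0..v, ζ x) - c * K * v := by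
          gcongr; exact hv.2
      _ = ∫ x in 0..v, c * (ζ x - K) := by
          simp only [mul_sub, integral_sub (hζv.const_mul c) intervalIntegrable_const,
            intervalIntegral.integral_const_mul, intervalIntegral.integral_const, smul_eq_mul]
          ring
      _ ≤ ∫ x in 0..v, G x :=
          integral_mono_on hv.1 ((hζv.sub intervalIntegrable_const).const_mul c)
            (hG.mono_set hsub) fun x hx => hGζ x ⟨hx.1, hx.2.trans hv.2⟩
  have hdiscount : ∀ {F : ℝ → ℝ}, IntervalIntegrable F volume 0 r →
      IntervalIntegrable (fun v => exp (-(∫ x in 0..v, F x)) * ζ v) volume 0 r := fun hF =>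
    hζ.continuousOn_mul (continuousOn_primitive_interval' hF left_mem_uIcc).neg.rexp
  calc ∫ v in 0..r, exp (-∫ x in 0..v, G x) * ζ v
      ≤ ∫ v in 0..r, exp (c * K * r) * (exp (-(c * ∫ x in 0..v, ζ x)) * ζ v) := by
        refine integral_mono_on hr (hdiscount hG) ?_ fun v hv => ?_
        · simpa only [intervalIntegral.integral_const_mul] using
            (hdiscount (hζ.const_mul c)).const_mul _
        · rw [← mul_assoc, ← exp_add]
          gcongr
          · exact hζ0 v hv
          · linarith [hlow v hv]
    _ = exp (c * K * r) * ∫ v in 0..r, exp (-(c * ∫ x in 0..v, ζ x)) * ζ v :=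
        intervalIntegral.integral_const_mul _ _
    _ ≤ exp (c * K * r) * (1 / c) := by
        gcongr; exact integral_exp_neg_mul_integral_mul_le hc hr hζ hζ0
    _ = exp (c * K * r) / c := by ring

theorem intervalIntegrable_of_mem_Icc {f : ℝ → ℝ} {a b m M : ℝ} (hab : a ≤ b)
    (hf : AEMeasurable f (volume.restrict (Ioc a b))) (hfb : ∀ x ∈ Ioc a b, f x ∈ Icc m M) :
    IntervalIntegrable f volume a b :=
  (intervalIntegrable_iff_integrableOn_Ioc_of_le hab).2 <|
    Integrable.of_mem_Icc m M hf ((ae_restrict_mem measurableSet_Ioc).mono hfb)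

section Impact

variable {h : ℝ → ℝ}

theorem MonotoneOn.intervalIntegrable_of_Ici (hmono : MonotoneOn h (Ici 0)) {a b : ℝ}
    (ha : 0 ≤ a) (hb : 0 ≤ b) : IntervalIntegrable h volume a b :=
  (hmono.mono fun _ hx => (le_min ha hb).trans hx.1).intervalIntegrable

theorem mul_sub_le_integral_of_monotoneOn (hmono : MonotoneOn h (Ici 0))
    (hnonneg : ∀ x ≥ 0, 0 ≤ h x) {K y : ℝ} (hK : 0 ≤ K) (hy : 0 ≤ y) :
    h K * (y - K) ≤ ∫ x in 0..y, h x := by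
  rcases le_or_gt K y with hKy | hyK
  · calc h K * (y - K) = ∫ _ in K..y, h K := by
          rw [intervalIntegral.integral_const, smul_eq_mul]; ring
      _ ≤ ∫ x in K..y, h x :=
          integral_mono_on hKy intervalIntegrable_const (hmono.intervalIntegrable_of_Ici hK hy)
            fun x hx => hmono hK (hK.trans hx.1) hx.1
      _ ≤ ∫ x in 0..y, h x :=
          integral_mono_interval hK hKy le_rfl
            ((ae_restrict_mem measurableSet_Ioc).mono fun x hx => hnonneg x hx.1.le)
            (hmono.intervalIntegrable_of_Ici le_rfl hy)
  · exact (mul_nonpos_of_nonneg_of_nonpos (hnonneg K hK) (by linarith)).trans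
      (integral_nonneg hy fun x hx => hnonneg x hx.1)

noncomputable def impactEnvelope (h : ℝ → ℝ) (s : ℝ) : ℝ :=
  ⨅ K : {K : ℝ // 0 ≤ K ∧ 0 < h K}, exp (h K * K * s) / h K

theorem bddBelow_range_impactEnvelope (s : ℝ) :
    BddBelow (range fun K : {K : ℝ // 0 ≤ K ∧ 0 < h K} => exp (h K * K * s) / h K) := by
  refine ⟨0, ?_⟩
  rintro _ ⟨⟨K, -, hK⟩, rfl⟩
  positivity

theorem impactEnvelope_nonneg (s : ℝ) : 0 ≤ impactEnvelope h s :=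
  Real.iInf_nonneg fun K => div_nonneg (exp_pos _).le K.2.2.le

theorem impactEnvelope_le {K : ℝ} (hK : 0 ≤ K) (hhK : 0 < h K) (s : ℝ) :
    impactEnvelope h s ≤ exp (h K * K * s) / h K :=
  ciInf_le (bddBelow_range_impactEnvelope s) ⟨K, hK, hhK⟩

theorem monotone_impactEnvelope : Monotone (impactEnvelope h) := fun s t hst =>
  ciInf_mono (bddBelow_range_impactEnvelope s) fun ⟨K, hK, hhK⟩ => by
    dsimp only
    gcongr

theorem tendsto_impactEnvelope (htop : Tendsto h atTop atTop) :
    Tendsto (impactEnvelope h) (𝓝[>] 0) (𝓝 0) := by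
  refine tendsto_order.2 ⟨fun a ha => Eventually.of_forall fun s =>
    ha.trans_le (impactEnvelope_nonneg s), fun ε hε => ?_⟩
  obtain ⟨K, hhK, hK⟩ := ((htop.eventually_gt_atTop (1 / ε)).and (eventually_ge_atTop 0)).exists
  have hc : 0 < h K := (one_div_pos.2 hε).trans hhK
  have hlim : Tendsto (fun s => exp (h K * K * s) / h K) (𝓝 0) (𝓝 (1 / h K)) := by
    simpa using ((continuous_const.mul continuous_id).rexp.div_const (h K)).tendsto 0
  have hsmall : 1 / h K < ε := by rwa [one_div_lt hc hε]
  filter_upwards [nhdsWithin_le_nhds (hlim.eventually (gt_mem_nhds hsmall))] with s hs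
  exact (impactEnvelope_le hK hc s).trans_lt hs

theorem integral_discounted_le_impactEnvelope {ζ : ℝ → ℝ} (hmono : MonotoneOn h (Ici 0))
    (hnonneg : ∀ x ≥ 0, 0 ≤ h x) (hpos : ∃ K, 0 ≤ K ∧ 0 < h K) (hζ : Measurable ζ) {r M : ℝ}
    (hr : 0 ≤ r) (hζr : ∀ v ∈ Icc 0 r, ζ v ∈ Icc 0 M) :
    ∫ v in 0..r, exp (-∫ x in 0..v, ∫ y in 0..ζ x, h y) * ζ v ≤ impactEnvelope h r := by
  set g : ℝ → ℝ := fun z => ∫ y in 0..z, h y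
  have hg : MonotoneOn g (Ici 0) := fun x hx y hy hxy =>
    integral_mono_interval le_rfl hx hxy
      ((ae_restrict_mem measurableSet_Ioc).mono fun z hz => hnonneg z hz.1.le)
      (hmono.intervalIntegrable_of_Ici le_rfl hy)
  have hgζ : AEMeasurable (fun x => g (ζ x)) (volume.restrict (Ioc 0 r)) := by
    have hg' : Monotone fun z => g (max z 0) := fun a b hab =>
      hg (le_max_right a 0) (le_max_right b 0) (max_le_max_right 0 hab)
    refine (hg'.measurable.comp hζ).aemeasurable.congr ?_
    filter_upwards [ae_restrict_mem measurableSet_Ioc] with x hx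
    simp only [Function.comp_apply, max_eq_left (hζr x (Ioc_subset_Icc_self hx)).1]
  obtain ⟨K₀, hK₀⟩ := hpos
  have : Nonempty {K : ℝ // 0 ≤ K ∧ 0 < h K} := ⟨⟨K₀, hK₀⟩⟩
  refine le_ciInf fun ⟨K, hK, hhK⟩ => integral_exp_neg_integral_mul_le hhK hK hr ?_ ?_
    (fun x hx => (hζr x hx).1)
    (fun x hx => mul_sub_le_integral_of_monotoneOn hmono hnonneg hK (hζr x hx).1)
  · refine intervalIntegrable_of_mem_Icc (m := g 0) (M := g M) hr hgζ fun x hx => ?_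
    have hx' := hζr x (Ioc_subset_Icc_self hx)
    exact ⟨hg self_mem_Ici hx'.1 hx'.1, hg hx'.1 (hx'.1.trans hx'.2) hx'.2⟩
  · exact intervalIntegrable_of_mem_Icc hr hζ.aemeasurable
      fun x hx => hζr x (Ioc_subset_Icc_self hx)

end Impact

noncomputable def doublingAverage (ψ : ℝ → ℝ) (r : ℝ) : ℝ :=
  (∫ s in r..2 * r, ψ s) / r

section DoublingAverage

variable {ψ : ℝ → ℝ}

theorem Monotone.continuousOn_doublingAverage (hψ : Monotone ψ) :
    ContinuousOn (doublingAverage ψ) (Ioi 0) := by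
  have hint : ∀ a b, IntervalIntegrable ψ volume a b := fun _ _ => hψ.intervalIntegrable
  have hcont : Continuous fun r => ∫ s in r..2 * r, ψ s := by
    have heq : (fun r => ∫ s in r..2 * r, ψ s) =
        fun r => (∫ s in 0..2 * r, ψ s) - ∫ s in 0..r, ψ s :=
      funext fun r => (integral_interval_sub_left (hint 0 _) (hint 0 _)).symm
    rw [heq]
    exact ((continuous_primitive hint 0).comp (continuous_const.mul continuous_id)).sub
      (continuous_primitive hint 0)
  exact hcont.continuousOn.div continuousOn_id fun r hr => hr.ne'

theorem Monotone.le_doublingAverage (hψ : Monotone ψ) {r : ℝ} (hr : 0 < r) :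
    ψ r ≤ doublingAverage ψ r := by
  rw [doublingAverage, le_div_iff₀ hr]
  calc ψ r * r = ∫ _ in r..2 * r, ψ r := by
        rw [intervalIntegral.integral_const, smul_eq_mul]; ring
    _ ≤ ∫ s in r..2 * r, ψ s :=
        integral_mono_on (by linarith) intervalIntegrable_const hψ.intervalIntegrable
          fun s hs => hψ hs.1

theorem Monotone.doublingAverage_le (hψ : Monotone ψ) {r : ℝ} (hr : 0 < r) :
    doublingAverage ψ r ≤ ψ (2 * r) := by
  rw [doublingAverage, div_le_iff₀ hr]
  calc ∫ s in r..2 * r, ψ s ≤ ∫ _ in r..2 * r, ψ (2 * r) :=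
        integral_mono_on (by linarith) hψ.intervalIntegrable intervalIntegrable_const
          fun s hs => hψ hs.2
    _ = ψ (2 * r) * r := by rw [intervalIntegral.integral_const, smul_eq_mul]; ring

theorem Monotone.tendsto_doublingAverage (hψ : Monotone ψ) (h0 : Tendsto ψ (𝓝[>] 0) (𝓝 0)) :
    Tendsto (doublingAverage ψ) (𝓝[>] 0) (𝓝 0) := by
  have hdouble : Tendsto (fun r : ℝ => 2 * r) (𝓝[>] 0) (𝓝[>] 0) := by
    refine tendsto_nhdsWithin_iff.2 ⟨?_, eventually_mem_nhdsWithin.mono fun r hr => ?_⟩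
    · simpa using ((continuous_const_mul (2 : ℝ)).tendsto 0).mono_left nhdsWithin_le_nhds
    · exact mul_pos two_pos (mem_Ioi.1 hr)
  exact tendsto_of_tendsto_of_tendsto_of_le_of_le' h0 (h0.comp hdouble)
    (eventually_mem_nhdsWithin.mono fun r hr => hψ.le_doublingAverage hr)
    (eventually_mem_nhdsWithin.mono fun r hr => hψ.doublingAverage_le hr)

end DoublingAverage

theorem discounted_sales_uniform_bound_general (Φ₀ : ℝ) (h : ℝ → ℝ)
    (hmono : MonotoneOn h (Set.Ici 0))
    (hnonneg : ∀ x ≥ (0 : ℝ), 0 ≤ h x)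
    (htop : Filter.Tendsto h Filter.atTop Filter.atTop)
    (g : ℝ → ℝ) (hg : ∀ ζ : ℝ, g ζ = ∫ x in (0 : ℝ)..ζ, h x) :
    ∃ φ : ℝ → ℝ, ContinuousOn φ (Set.Ioc 0 1) ∧
      (∀ r ∈ Set.Ioc (0 : ℝ) 1, 0 ≤ φ r) ∧
      Filter.Tendsto φ (nhdsWithin 0 (Set.Ioi 0)) (nhds 0) ∧
      ∀ t ∈ Set.Ioc (0 : ℝ) 1, ∀ ζ : ℝ → ℝ, Measurable ζ →
        (∃ M : ℝ, ∀ v ∈ Set.Icc (0 : ℝ) t, ζ v ≤ M) →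
        (∀ v ∈ Set.Icc (0 : ℝ) t, 0 ≤ ζ v) →
        (∫ v in (0 : ℝ)..t, ζ v) ≤ Φ₀ →
        ∀ r ∈ Set.Ioc (0 : ℝ) t,
          (∫ v in (0 : ℝ)..r,
              Real.exp (-(∫ x in (0 : ℝ)..v, g (ζ x))) * ζ v) ≤ φ r := by
  obtain rfl : g = fun z => ∫ x in 0..z, h x := funext hg
  have hψ := monotone_impactEnvelope (h := h)
  have hpos : ∃ K, 0 ≤ K ∧ 0 < h K :=
    ((eventually_ge_atTop 0).and (htop.eventually_gt_atTop 0)).exists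
  refine ⟨doublingAverage (impactEnvelope h),
    hψ.continuousOn_doublingAverage.mono fun r hr => hr.1,
    fun r hr => (impactEnvelope_nonneg r).trans (hψ.le_doublingAverage hr.1),
    hψ.tendsto_doublingAverage (tendsto_impactEnvelope htop), ?_⟩
  rintro t - ζ hζ ⟨M, hM⟩ hζ0 - r ⟨hr, hrt⟩
  refine (integral_discounted_le_impactEnvelope (M := M) hmono hnonneg hpos hζ hr.le
    fun v hv => ?_).trans (hψ.le_doublingAverage hr)
  have hvt : v ∈ Icc 0 t := ⟨hv.1, hv.2.trans hrt⟩
  exact ⟨hζ0 v hvt, hM v hvt⟩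

/-- Lemma 7 of the paper: if `h` is nondecreasing, continuous,
nonnegative on `[0,∞)` with `h(ζ) → ∞`, and `g(ζ) = ∫₀^ζ h`, then there is a
continuous function `φ : (0,1] → [0,∞)` with `φ(r) → 0` as `r ↓ 0`, depending only
on `h` and `Φ₀`, such that for every admissible strategy `ζ` with total sales at
most `Φ₀`, the impact-discounted sales up to time `r` are bounded by `φ(r)`. -/
theorem discounted_sales_uniform_bound (Φ₀ : ℝ) (hΦ₀ : 0 < Φ₀) (h : ℝ → ℝ)
    (hmono : MonotoneOn h (Set.Ici 0)) (hcont : ContinuousOn h (Set.Ici 0))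
    (hnonneg : ∀ x ≥ (0 : ℝ), 0 ≤ h x)
    (htop : Filter.Tendsto h Filter.atTop Filter.atTop)
    (g : ℝ → ℝ) (hg : ∀ ζ : ℝ, g ζ = ∫ x in (0 : ℝ)..ζ, h x) :
    ∃ φ : ℝ → ℝ, ContinuousOn φ (Set.Ioc 0 1) ∧
      (∀ r ∈ Set.Ioc (0 : ℝ) 1, 0 ≤ φ r) ∧
      Filter.Tendsto φ (nhdsWithin 0 (Set.Ioi 0)) (nhds 0) ∧
      ∀ t ∈ Set.Ioc (0 : ℝ) 1, ∀ ζ : ℝ → ℝ, Measurable ζ →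
        (∃ M : ℝ, ∀ v ∈ Set.Icc (0 : ℝ) t, ζ v ≤ M) →
        (∀ v ∈ Set.Icc (0 : ℝ) t, 0 ≤ ζ v) →
        (∫ v in (0 : ℝ)..t, ζ v) ≤ Φ₀ →
        ∀ r ∈ Set.Ioc (0 : ℝ) t,
          (∫ v in (0 : ℝ)..r,
              Real.exp (-(∫ x in (0 : ℝ)..v, g (ζ x))) * ζ v) ≤ φ r :=
  discounted_sales_uniform_bound_general Φ₀ h hmono hnonneg htop g hg
end

section
/- Let Φ₀ > 0, let h : [0,∞) → [0,∞) be nondecreasing and continuous, let g(ζ) = ∫₀^ζ h(ζ') dζ', and let g_n : [0,Φ₀] → [0,∞) (n ∈ ℕ) be nondecreasing continuously differentiable functions with g_n(0) = 0 satisfying sup_{ψ ∈ [0,Φ₀]} | g_n'(ψ) − h(n·ψ) | → 0 as n → ∞. Then ε_n := sup_{ψ ∈ (0,Φ₀]} | g_n(ψ)/ψ − g(n·ψ)/(n·ψ) | → 0 as n → ∞. -/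
/-!
With `F := gₙ - g(n·)/n` one has `gₙ(ψ)/ψ - g(nψ)/(nψ) = (F ψ - F 0)/ψ`, since `F 0 = 0`.
By the fundamental theorem of calculus `F' = gₙ' - h(n·)`, so by the mean value theorem this
slope is bounded by `sup |gₙ' - h(n·)|`, which tends to `0` by condition [A].
-/

open Set MeasureTheory

theorem abs_sub_le_mul_of_hasDerivAt {F F' : ℝ → ℝ} {a b C : ℝ} (hab : a < b)
    (hF : ContinuousOn F (Icc a b)) (hF' : ∀ x ∈ Ioo a b, HasDerivAt F (F' x) x)
    (hC : ∀ x ∈ Ioo a b, |F' x| ≤ C) : |F b - F a| ≤ C * (b - a) := by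
  obtain ⟨c, hc, hslope⟩ := exists_hasDerivAt_eq_slope F F' hab hF hF'
  have hba : 0 < b - a := sub_pos.2 hab
  rw [← div_le_iff₀ hba, ← abs_of_pos hba, ← abs_div, ← hslope]
  exact hC c hc

theorem hasDerivAt_integral_of_continuousOn_Ici {h : ℝ → ℝ} (hcont : ContinuousOn h (Ici 0))
    {ζ : ℝ} (hζ : 0 < ζ) : HasDerivAt (fun u => ∫ x in (0 : ℝ)..u, h x) (h ζ) ζ :=
  intervalIntegral.integral_hasDerivAt_right
    ((hcont.mono Icc_subset_Ici_self).intervalIntegrable_of_Icc hζ.le)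
    (ContinuousOn.stronglyMeasurableAtFilter isOpen_Ioi (hcont.mono Ioi_subset_Ici_self) ζ hζ)
    (hcont.continuousAt (Ici_mem_nhds hζ))

theorem continuousOn_integral_of_continuousOn_Ici {h : ℝ → ℝ} (hcont : ContinuousOn h (Ici 0))
    {b : ℝ} (hb : 0 ≤ b) : ContinuousOn (fun u => ∫ x in (0 : ℝ)..u, h x) (Icc 0 b) := by
  have hint : IntegrableOn h (uIcc 0 b) := by
    rw [uIcc_of_le hb]
    exact (hcont.mono Icc_subset_Ici_self).integrableOn_Icc
  simpa only [uIcc_of_le hb] using intervalIntegral.continuousOn_primitive_interval hint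

theorem abs_div_sub_integral_div_le {h G G' : ℝ → ℝ} {n ψ ε : ℝ} (hn : 0 < n)
    (hψ : 0 < ψ) (hcont : ContinuousOn h (Ici 0)) (hGc : ContinuousOn G (Icc 0 ψ))
    (hG : ∀ x ∈ Ioo 0 ψ, HasDerivAt G (G' x) x) (hG0 : G 0 = 0)
    (hbound : ∀ x ∈ Ioo 0 ψ, |G' x - h (n * x)| ≤ ε) :
    |G ψ / ψ - (∫ x in (0 : ℝ)..n * ψ, h x) / (n * ψ)| ≤ ε := by
  set F := fun x => G x - (∫ t in (0 : ℝ)..n * x, h t) / n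
  have hFc : ContinuousOn F (Icc 0 ψ) := by
    refine hGc.sub (((continuousOn_integral_of_continuousOn_Ici hcont
      (mul_pos hn hψ).le).comp (continuous_const_mul n).continuousOn ?_).div_const n)
    exact fun x hx => ⟨mul_nonneg hn.le hx.1, mul_le_mul_of_nonneg_left hx.2 hn.le⟩
  have hF : ∀ x ∈ Ioo 0 ψ, HasDerivAt F (G' x - h (n * x)) x := by
    intro x hx
    have hint : HasDerivAt (fun x => (∫ t in (0 : ℝ)..n * x, h t) / n) (h (n * x)) x := by
      have := ((hasDerivAt_integral_of_continuousOn_Ici hcont (mul_pos hn hx.1)).comp x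
        ((hasDerivAt_id x).const_mul n)).div_const n
      rwa [mul_one, mul_div_cancel_right₀ _ hn.ne'] at this
    exact (hG x hx).sub hint
  have hslope := abs_sub_le_mul_of_hasDerivAt hψ hFc hF hbound
  have hratio : G ψ / ψ - (∫ x in (0 : ℝ)..n * ψ, h x) / (n * ψ) = (F ψ - F 0) / ψ := by
    simp only [F, hG0, mul_zero, intervalIntegral.integral_same, zero_div, sub_zero]
    field_simp
  rw [hratio, abs_div, abs_of_pos hψ, div_le_iff₀ hψ]
  simpa using hslope

theorem condition_A_implies_ratio_convergence_general (Φ₀ : ℝ) (h : ℝ → ℝ)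
    (hcont : ContinuousOn h (Set.Ici 0))
    (g : ℝ → ℝ) (hg : ∀ ζ : ℝ, g ζ = ∫ x in (0 : ℝ)..ζ, h x)
    (gn gn' : ℕ → ℝ → ℝ)
    (hgn_zero : ∀ n, gn n 0 = 0)
    (hgn_deriv : ∀ n, ∀ ψ ∈ Set.Icc (0 : ℝ) Φ₀,
      HasDerivWithinAt (gn n) (gn' n ψ) (Set.Icc 0 Φ₀) ψ)
    (hA : ∀ ε > (0 : ℝ), ∃ N : ℕ, ∀ n ≥ N, ∀ ψ ∈ Set.Icc (0 : ℝ) Φ₀,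
      |gn' n ψ - h ((n : ℝ) * ψ)| ≤ ε) :
    ∀ ε > (0 : ℝ), ∃ N : ℕ, ∀ n ≥ N, ∀ ψ ∈ Set.Ioc (0 : ℝ) Φ₀,
      |gn n ψ / ψ - g ((n : ℝ) * ψ) / ((n : ℝ) * ψ)| ≤ ε := by
  intro ε hε
  obtain ⟨N, hN⟩ := hA ε hε
  -- `n = 0` is excluded: there `g (n * ψ) / (n * ψ)` is the junk value `0`, not `h 0`.
  refine ⟨max N 1, fun n hn ψ ⟨hψ, hψΦ₀⟩ => ?_⟩
  have hn₀ : (0 : ℝ) < n := by exact_mod_cast (le_max_right N 1).trans hn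
  have hsub : Icc 0 ψ ⊆ Icc 0 Φ₀ := Icc_subset_Icc_right hψΦ₀
  rw [hg]
  refine abs_div_sub_integral_div_le hn₀ hψ hcont
    (fun x hx => (hgn_deriv n x (hsub hx)).continuousWithinAt.mono hsub) (fun x hx => ?_)
    (hgn_zero n) (fun x hx => hN n ((le_max_left N 1).trans hn) x (hsub (Ioo_subset_Icc_self hx)))
  exact (hgn_deriv n x (hsub (Ioo_subset_Icc_self hx))).hasDerivAt
    (Icc_mem_nhds hx.1 (hx.2.trans_le hψΦ₀))

/-- under the paper's condition [A]
(`sup_{ψ ∈ [0,Φ₀]} |gₙ'(ψ) - h(nψ)| → 0`), one has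
`εₙ = sup_{ψ ∈ (0,Φ₀]} |gₙ(ψ)/ψ - g(nψ)/(nψ)| → 0`, where `g(ζ) = ∫₀^ζ h`. -/
theorem condition_A_implies_ratio_convergence (Φ₀ : ℝ) (hΦ₀ : 0 < Φ₀) (h : ℝ → ℝ)
    (hmono : MonotoneOn h (Set.Ici 0)) (hcont : ContinuousOn h (Set.Ici 0))
    (hnonneg : ∀ x ≥ (0 : ℝ), 0 ≤ h x)
    (g : ℝ → ℝ) (hg : ∀ ζ : ℝ, g ζ = ∫ x in (0 : ℝ)..ζ, h x)
    (gn gn' : ℕ → ℝ → ℝ)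
    (hgn_mono : ∀ n, MonotoneOn (gn n) (Set.Icc 0 Φ₀))
    (hgn_zero : ∀ n, gn n 0 = 0)
    (hgn_nonneg : ∀ n, ∀ ψ ∈ Set.Icc (0 : ℝ) Φ₀, 0 ≤ gn n ψ)
    (hgn_deriv : ∀ n, ∀ ψ ∈ Set.Icc (0 : ℝ) Φ₀,
      HasDerivWithinAt (gn n) (gn' n ψ) (Set.Icc 0 Φ₀) ψ)
    (hgn'_cont : ∀ n, ContinuousOn (gn' n) (Set.Icc 0 Φ₀))
    (hA : ∀ ε > (0 : ℝ), ∃ N : ℕ, ∀ n ≥ N, ∀ ψ ∈ Set.Icc (0 : ℝ) Φ₀,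
      |gn' n ψ - h ((n : ℝ) * ψ)| ≤ ε) :
    ∀ ε > (0 : ℝ), ∃ N : ℕ, ∀ n ≥ N, ∀ ψ ∈ Set.Ioc (0 : ℝ) Φ₀,
      |gn n ψ / ψ - g ((n : ℝ) * ψ) / ((n : ℝ) * ψ)| ≤ ε :=
  condition_A_implies_ratio_convergence_general Φ₀ h hcont g hg gn gn' hgn_zero hgn_deriv hA
end

section
/- Let Φ₀ > 0, let h : [0,∞) → [0,∞) be nondecreasing and continuous with lim_{ζ→∞} h(ζ) = ∞, and let g_n : [0,Φ₀] → [0,∞) (n ∈ ℕ) be nondecreasing continuously differentiable functions with g_n(0) = 0 satisfying sup_{ψ ∈ [0,Φ₀]} | g_n'(ψ) − h(n·ψ) | → 0 as n → ∞. If ψ_n ∈ (0,Φ₀] satisfy ψ_n·g_n'(ψ_n) = 1 for every n, then n·ψ_n → ∞ as n → ∞. -/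
/-!
Whenever `n ψₙ < M`, condition [A] and the monotonicity of `h` bound `gₙ'(ψₙ)` by a constant
`C ≥ 1` depending only on `M`, so `ψₙ = 1 / gₙ'(ψₙ) ≥ 1 / C` and `n ψₙ ≥ n / C`, which is at least
`M` once `n ≥ M C`.
-/

open Filter Set

theorem tendsto_natCast_mul_atTop_of_one_le_mul_monotoneOn {x : ℕ → ℝ} {F : ℝ → ℝ}
    (hF : MonotoneOn F (Ici 0)) (hx : ∀ n, 0 ≤ x n)
    (hbound : ∀ᶠ n in atTop, 1 ≤ x n * F (n * x n)) :
    Tendsto (fun n : ℕ => (n : ℝ) * x n) atTop atTop := by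
  refine (atTop_basis' 0).tendsto_right_iff.2 fun M hM => ?_
  set C := max (F M) 1
  filter_upwards [hbound, tendsto_natCast_atTop_atTop.eventually_ge_atTop (M * C)]
    with n hn hnC
  rw [mem_Ici]
  by_contra! hlt
  have hFC : F (n * x n) ≤ C :=
    (hF (mul_nonneg n.cast_nonneg (hx n)) hM hlt.le).trans (le_max_left _ _)
  have hxC : 1 ≤ x n * C := hn.trans (mul_le_mul_of_nonneg_left hFC (hx n))
  have : M ≤ n * x n := calc
    M ≤ M * (x n * C) := le_mul_of_one_le_right hM hxC
    _ = M * C * x n := by ring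
    _ ≤ n * x n := mul_le_mul_of_nonneg_right hnC (hx n)
  linarith

theorem critical_points_diverge_general (Φ₀ : ℝ) (h : ℝ → ℝ)
    (hmono : MonotoneOn h (Set.Ici 0))
    (gn' : ℕ → ℝ → ℝ)
    (hA : ∀ ε > (0 : ℝ), ∃ N : ℕ, ∀ n ≥ N, ∀ ψ ∈ Set.Icc (0 : ℝ) Φ₀,
      |gn' n ψ - h ((n : ℝ) * ψ)| ≤ ε)
    (ψn : ℕ → ℝ) (hψn : ∀ n, ψn n ∈ Set.Ioc (0 : ℝ) Φ₀)
    (hψn_eq : ∀ n, ψn n * gn' n (ψn n) = 1) :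
    Filter.Tendsto (fun n : ℕ => (n : ℝ) * ψn n) Filter.atTop Filter.atTop := by
  have hmono' : MonotoneOn (fun z => h z + 1) (Ici 0) :=
    fun a ha b hb hab => by simpa using hmono ha hb hab
  refine tendsto_natCast_mul_atTop_of_one_le_mul_monotoneOn hmono' (fun n => (hψn n).1.le) ?_
  obtain ⟨N, hN⟩ := hA 1 one_pos
  filter_upwards [eventually_ge_atTop N] with n hn
  have hg : gn' n (ψn n) ≤ h (n * ψn n) + 1 := by
    linarith [(abs_le.1 (hN n hn (ψn n) (Ioc_subset_Icc_self (hψn n)))).2]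
  calc (1 : ℝ) = ψn n * gn' n (ψn n) := (hψn_eq n).symm
    _ ≤ ψn n * (h (n * ψn n) + 1) := mul_le_mul_of_nonneg_left hg (hψn n).1.le

/-- under the paper's condition [A] and `h(ζ) → ∞`, if `ψₙ ∈ (0,Φ₀]`
satisfies `ψₙ · gₙ'(ψₙ) = 1` for every `n`, then `n ψₙ → ∞`. -/
theorem critical_points_diverge (Φ₀ : ℝ) (hΦ₀ : 0 < Φ₀) (h : ℝ → ℝ)
    (hmono : MonotoneOn h (Set.Ici 0)) (hcont : ContinuousOn h (Set.Ici 0))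
    (hnonneg : ∀ x ≥ (0 : ℝ), 0 ≤ h x)
    (htop : Filter.Tendsto h Filter.atTop Filter.atTop)
    (gn gn' : ℕ → ℝ → ℝ)
    (hgn_mono : ∀ n, MonotoneOn (gn n) (Set.Icc 0 Φ₀))
    (hgn_zero : ∀ n, gn n 0 = 0)
    (hgn_nonneg : ∀ n, ∀ ψ ∈ Set.Icc (0 : ℝ) Φ₀, 0 ≤ gn n ψ)
    (hgn_deriv : ∀ n, ∀ ψ ∈ Set.Icc (0 : ℝ) Φ₀,
      HasDerivWithinAt (gn n) (gn' n ψ) (Set.Icc 0 Φ₀) ψ)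
    (hgn'_cont : ∀ n, ContinuousOn (gn' n) (Set.Icc 0 Φ₀))
    (hA : ∀ ε > (0 : ℝ), ∃ N : ℕ, ∀ n ≥ N, ∀ ψ ∈ Set.Icc (0 : ℝ) Φ₀,
      |gn' n ψ - h ((n : ℝ) * ψ)| ≤ ε)
    (ψn : ℕ → ℝ) (hψn : ∀ n, ψn n ∈ Set.Ioc (0 : ℝ) Φ₀)
    (hψn_eq : ∀ n, ψn n * gn' n (ψn n) = 1) :
    Filter.Tendsto (fun n : ℕ => (n : ℝ) * ψn n) Filter.atTop Filter.atTop :=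
  critical_points_diverge_general Φ₀ h hmono gn' hA ψn hψn hψn_eq
end

section
/- Let Φ₀ > 0, let h : [0,∞) → [0,∞) be nondecreasing and continuous, and let g_n : [0,Φ₀] → [0,∞) be a nondecreasing continuously differentiable function with g_n(0) = 0. Set ε'_n = sup_{ψ ∈ [0,Φ₀]} | g_n'(ψ) − h(n·ψ) | and suppose ψ*_n ∈ (0,Φ₀] satisfies ψ*_n·g_n'(ψ*_n) = 1. Then for every ψ ∈ [0, ψ*_n], g_n(ψ) ≤ (1/ψ*_n + 2·ε'_n)·ψ. -/
/-!
Since `g'` stays within `ε'` of the nondecreasing function `ψ ↦ h (n ψ)`, on `[0, ψ*]` it is at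
most `g'(ψ*) + 2ε' = 1/ψ* + 2ε'`; the mean value inequality, started from `g(0) = 0`, then gives
the linear bound.
-/

open Set

theorem image_le_add_mul_sub_of_hasDerivWithinAt_Icc {f f' : ℝ → ℝ} {a b C : ℝ}
    (hf : ∀ x ∈ Icc a b, HasDerivWithinAt f (f' x) (Icc a b) x)
    (hf'C : ∀ x ∈ Icc a b, f' x ≤ C) :
    ∀ x ∈ Icc a b, f x ≤ f a + C * (x - a) := by
  have hB : ∀ x, HasDerivAt (fun y => f a + C * (y - a)) C x := fun x => by
    simpa using ((hasDerivAt_id x).sub_const a).const_mul C |>.const_add (f a)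
  exact image_le_of_deriv_right_le_deriv_boundary
    (fun x hx => (hf x hx).continuousWithinAt)
    (fun x hx => (hf x (Ico_subset_Icc_self hx)).mono_of_mem_nhdsWithin
      (Icc_mem_nhdsGE_of_mem hx))
    (by simp) (fun x _ => (hB x).continuousAt.continuousWithinAt)
    (fun x _ => (hB x).hasDerivWithinAt) (fun x hx => hf'C x (Ico_subset_Icc_self hx))

theorem le_add_two_mul_of_abs_sub_le_of_monotoneOn {g k : ℝ → ℝ} {s : Set ℝ} {ε : ℝ}
    (hk : MonotoneOn k s) (hgk : ∀ x ∈ s, |g x - k x| ≤ ε) {x y : ℝ} (hx : x ∈ s)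
    (hy : y ∈ s) (hxy : x ≤ y) : g x ≤ g y + 2 * ε := by
  have hgx := (abs_le.mp (hgk x hx)).2
  have hgy := (abs_le.mp (hgk y hy)).1
  linarith [hk hx hy hxy]

theorem linear_bound_below_critical_point_general (Φ₀ : ℝ) (h : ℝ → ℝ)
    (hmono : MonotoneOn h (Set.Ici 0))
    (n : ℕ) (gn gn' : ℝ → ℝ)
    (hgn_zero : gn 0 = 0)
    (hgn_deriv : ∀ ψ ∈ Set.Icc (0 : ℝ) Φ₀,
      HasDerivWithinAt gn (gn' ψ) (Set.Icc 0 Φ₀) ψ)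
    (ε' : ℝ) (hε' : ∀ ψ ∈ Set.Icc (0 : ℝ) Φ₀, |gn' ψ - h ((n : ℝ) * ψ)| ≤ ε')
    (ψs : ℝ) (hψs : ψs ∈ Set.Ioc (0 : ℝ) Φ₀) (hψs_eq : ψs * gn' ψs = 1) :
    ∀ ψ ∈ Set.Icc (0 : ℝ) ψs, gn ψ ≤ (1 / ψs + 2 * ε') * ψ := by
  intro ψ hψ
  obtain ⟨hψs_pos, hψs_le⟩ := hψs
  have hsub : Icc 0 ψs ⊆ Icc 0 Φ₀ := Icc_subset_Icc_right hψs_le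
  have hk : MonotoneOn (fun x => h (n * x)) (Icc 0 Φ₀) :=
    hmono.comp ((monotone_mul_left_of_nonneg (n.cast_nonneg : (0 : ℝ) ≤ n)).monotoneOn _)
      fun _ hx => mul_nonneg n.cast_nonneg hx.1
  have hgn'_le : ∀ x ∈ Icc 0 ψs, gn' x ≤ 1 / ψs + 2 * ε' := fun x hx => by
    rw [← eq_one_div_of_mul_eq_one_right hψs_eq]
    exact le_add_two_mul_of_abs_sub_le_of_monotoneOn hk hε' (hsub hx)
      ⟨hψs_pos.le, hψs_le⟩ hx.2
  simpa [hgn_zero] using image_le_add_mul_sub_of_hasDerivWithinAt_Icc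
    (fun x hx => (hgn_deriv x (hsub hx)).mono hsub) hgn'_le ψ hψ

/-- the key linear upper bound on the discrete market impact
function `gₙ` below the critical point `ψ*ₙ`: if `ε'ₙ` bounds
`sup_{ψ ∈ [0,Φ₀]} |gₙ'(ψ) - h(nψ)|` and `ψ*ₙ · gₙ'(ψ*ₙ) = 1`, then
`gₙ(ψ) ≤ (1/ψ*ₙ + 2 ε'ₙ) ψ` for all `ψ ∈ [0, ψ*ₙ]`. -/
theorem linear_bound_below_critical_point (Φ₀ : ℝ) (hΦ₀ : 0 < Φ₀) (h : ℝ → ℝ)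
    (hmono : MonotoneOn h (Set.Ici 0)) (hcont : ContinuousOn h (Set.Ici 0))
    (hnonneg : ∀ x ≥ (0 : ℝ), 0 ≤ h x)
    (n : ℕ) (gn gn' : ℝ → ℝ)
    (hgn_mono : MonotoneOn gn (Set.Icc 0 Φ₀))
    (hgn_zero : gn 0 = 0)
    (hgn_deriv : ∀ ψ ∈ Set.Icc (0 : ℝ) Φ₀,
      HasDerivWithinAt gn (gn' ψ) (Set.Icc 0 Φ₀) ψ)
    (hgn'_cont : ContinuousOn gn' (Set.Icc 0 Φ₀))
    (ε' : ℝ) (hε' : ∀ ψ ∈ Set.Icc (0 : ℝ) Φ₀, |gn' ψ - h ((n : ℝ) * ψ)| ≤ ε')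
    (ψs : ℝ) (hψs : ψs ∈ Set.Ioc (0 : ℝ) Φ₀) (hψs_eq : ψs * gn' ψs = 1) :
    ∀ ψ ∈ Set.Icc (0 : ℝ) ψs, gn ψ ≤ (1 / ψs + 2 * ε') * ψ :=
  linear_bound_below_critical_point_general Φ₀ h hmono n gn gn' hgn_zero hgn_deriv ε' hε' ψs hψs
    hψs_eq
end
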